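/- arXiv:2212.06778 — 2 statements merged into one kernel-verified Lean document; each statement's English description precedes it below -/
import Mathlib

section
/- Let f be a real-valued Schwartz function on ℝ^n with real-valued Fourier transform such that f(x) ≤ 0 for all ‖x‖ ≥ ℓ, 𝔉f(ξ) ≥ 0 for all ξ, and 𝔉f(0) > 0. Then for any full-rank lattice L ⊂ ℝ^n whose shortest nonzero vector has length ≥ ℓ, one has 1/covol(L) ≤ f(0)/𝔉f(0). -/
/-!
Poisson summation over `ℤⁿ`: the periodization `x ↦ ∑_{z ∈ ℤⁿ} φ (z + x)` of a Schwartz function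
`φ` is a continuous function on the torus `ℝⁿ/ℤⁿ` whose Fourier coefficients are the values of
`𝓕 φ` on `ℤⁿ`. These are summable, so the Fourier series converges pointwise, and at `x = 0` this
reads `∑_{ℤⁿ} φ = ∑_{ℤⁿ} 𝓕 φ`. Writing `L = T ℤⁿ` and applying it to `φ = f ∘ T`, whose Fourier
transform is `covol(L)⁻¹ • (𝓕 f) ∘ T⁻ᵀ`, gives
`f 0 ≥ ∑_{z ∈ ℤⁿ} f (T z) = covol(L)⁻¹ ∑_{m ∈ ℤⁿ} 𝓕 f (T⁻ᵀ m) ≥ covol(L)⁻¹ 𝓕 f 0`: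
the nonzero points of `L` have norm at least `ℓ`, where `f ≤ 0`, and `𝓕 f ≥ 0` everywhere.
-/

open MeasureTheory Set Submodule Filter
open scoped FourierTransform SchwartzMap

noncomputable section

theorem Summable.tsum_le_of_nonpos_of_ne {β : Type*} {u : β → ℝ} (hu : Summable u) (b : β)
    (h : ∀ b' ≠ b, u b' ≤ 0) : ∑' b', u b' ≤ u b := by
  classical
  rw [hu.tsum_eq_add_tsum_ite b]
  refine add_le_of_nonpos_right (tsum_nonpos fun b' => ?_)
  split_ifs with hb'
  exacts [le_rfl, h b' hb']

namespace SchwartzMap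

variable {V F : Type*} [NormedAddCommGroup V] [NormedSpace ℝ V] [FiniteDimensional ℝ V]
  [NormedAddCommGroup F] [NormedSpace ℝ F]

theorem exists_summable_bound_comp_add (ψ : 𝓢(V, F)) (L : Submodule ℤ V) [DiscreteTopology L]
    (r : ℝ) : ∃ u : L → ℝ, Summable u ∧ ∀ (z : L) (x : V), ‖x‖ ≤ r → ‖ψ (z + x)‖ ≤ u z := by
  set N := Module.finrank ℤ L + 1
  obtain ⟨C, hC⟩ : ∃ C, ∀ y : V, (1 + ‖y‖) ^ N * ‖ψ y‖ ≤ C := ⟨_, fun y => by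
    simpa using one_add_le_sup_seminorm_apply (𝕜 := ℝ) (m := (N, 0)) le_rfl le_rfl ψ y⟩
  have hC0 : 0 ≤ C := le_trans (by positivity) (hC 0)
  refine ⟨fun z => C * (1 + |r|) ^ N * (1 + ‖z‖)⁻¹ ^ N, ?_, fun z x hx => ?_⟩
  · refine .mul_left _ <| .of_norm_bounded_eventually
      (ZLattice.summable_norm_pow_inv L N (by omega)) ?_
    filter_upwards [eventually_cofinite_ne 0] with z hz
    rw [norm_pow, norm_inv, Real.norm_of_nonneg (by positivity)]
    gcongr
    linarith
  · have hz : 1 + ‖(z : V)‖ ≤ (1 + |r|) * (1 + ‖z + x‖) := by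
      have : ‖(z : V)‖ ≤ ‖z + x‖ + ‖x‖ := by simpa using norm_sub_le ((z : V) + x) x
      nlinarith [norm_nonneg (z + x), le_abs_self r, abs_nonneg r]
    calc ‖ψ (z + x)‖ ≤ C * (1 + ‖z + x‖)⁻¹ ^ N := by
          rw [inv_pow, ← div_eq_mul_inv, le_div_iff₀ (by positivity), mul_comm]; exact hC _
      _ ≤ C * ((1 + |r|) * (1 + ‖z‖)⁻¹) ^ N := by
          gcongr
          rw [← div_eq_mul_inv, le_div_iff₀ (by positivity), ← div_eq_inv_mul,
            div_le_iff₀ (by positivity)]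
          exact hz
      _ = C * (1 + |r|) ^ N * (1 + ‖z‖)⁻¹ ^ N := by rw [mul_pow, mul_assoc]

theorem summable_comp_coe [CompleteSpace F] (ψ : 𝓢(V, F)) (L : Submodule ℤ V)
    [DiscreteTopology L] : Summable fun z : L => ψ z := by
  obtain ⟨u, hu, hψu⟩ := ψ.exists_summable_bound_comp_add L 0
  exact .of_norm_bounded hu fun z => by simpa using hψu z 0 (by simp)

theorem continuous_tsum_comp_add [CompleteSpace F] (ψ : 𝓢(V, F)) (L : Submodule ℤ V)
    [DiscreteTopology L] : Continuous fun x => ∑' z : L, ψ (z + x) := by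
  refine continuous_iff_continuousAt.2 fun x₀ => ?_
  obtain ⟨u, hu, hψu⟩ := ψ.exists_summable_bound_comp_add L (‖x₀‖ + 1)
  refine (continuousOn_tsum (s := Metric.ball 0 (‖x₀‖ + 1))
    (fun z => (ψ.continuous.comp (continuous_const_add _)).continuousOn) hu
    fun z x hx => hψu z x (mem_ball_zero_iff.1 hx).le).continuousAt
    (Metric.isOpen_ball.mem_nhds (by simp))

end SchwartzMap

namespace MeasureTheory.IsAddFundamentalDomain

variable {G α E : Type*} [AddGroup G] [AddAction G α] [MeasurableSpace α] [MeasurableSpace G]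
  [MeasurableVAdd G α] [Countable G] {s : Set α} {μ : Measure α} [VAddInvariantMeasure G α μ]
  [NormedAddCommGroup E] [NormedSpace ℝ E]

theorem setIntegral_tsum_vadd (h : IsAddFundamentalDomain G s μ) {F : α → E}
    (hF : Integrable F μ) : ∫ x in s, ∑' g : G, F (g +ᵥ x) ∂μ = ∫ x, F x ∂μ := by
  rw [integral_tsum, h.integral_eq_tsum'' F hF]
  · exact fun g => (hF.aestronglyMeasurable.comp_measurePreserving
      (measurePreserving_vadd g μ)).restrict
  · rw [← h.lintegral_eq_tsum'' fun x => ‖F x‖ₑ]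
    exact hF.hasFiniteIntegral.ne

end MeasureTheory.IsAddFundamentalDomain

namespace UnitAddTorus

variable {ι : Type*}

def mk : C(ι → ℝ, UnitAddTorus ι) := ⟨fun x i => x i, by fun_prop⟩

theorem isOpenQuotientMap_mk : IsOpenQuotientMap (mk : (ι → ℝ) → UnitAddTorus ι) :=
  .piMap fun _ => QuotientAddGroup.isOpenQuotientMap_mk

theorem norm_mFourier_apply [Fintype ι] (n : ι → ℤ) (x : UnitAddTorus ι) :
    ‖mFourier n x‖ = 1 := by
  simp [mFourier, fourier_apply, Circle.norm_coe]

variable [Fintype ι]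

variable (ι) in
abbrev intLattice : Submodule ℤ (ι → ℝ) := span ℤ (range (Pi.basisFun ℝ ι))

theorem mem_intLattice {x : ι → ℝ} : x ∈ intLattice ι ↔ ∀ i, ∃ k : ℤ, (k : ℝ) = x i := by
  simp [Module.Basis.mem_span_iff_repr_mem]

theorem mk_eq_mk_iff {x y : ι → ℝ} : mk x = mk y ↔ y - x ∈ intLattice ι := by
  simp [mk, funext_iff, QuotientAddGroup.eq, AddSubgroup.mem_zmultiples_iff, mem_intLattice,
    neg_add_eq_sub]

theorem factorsThrough_tsum_comp_add_mk {E : Type*} [AddCommMonoid E] [TopologicalSpace E]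
    (ψ : (ι → ℝ) → E) : Function.FactorsThrough (fun x => ∑' z : intLattice ι, ψ (z + x)) mk := by
  intro x y hxy
  obtain ⟨w, rfl⟩ : ∃ w : intLattice ι, y = w + x := ⟨⟨y - x, mk_eq_mk_iff.1 hxy⟩, by simp⟩
  simp only [← add_assoc]
  exact ((Equiv.addRight w).tsum_eq fun z : intLattice ι => ψ (z + x)).symm

section Periodize

variable {E : Type*} [NormedAddCommGroup E] [NormedSpace ℂ E] [CompleteSpace E]

def periodize (ψ : 𝓢(ι → ℝ, E)) : C(UnitAddTorus ι, E) :=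
  isOpenQuotientMap_mk.isQuotientMap.lift ⟨_, ψ.continuous_tsum_comp_add (intLattice ι)⟩
    (factorsThrough_tsum_comp_add_mk ψ)

theorem periodize_mk (ψ : 𝓢(ι → ℝ, E)) (x : ι → ℝ) :
    periodize ψ (mk x) = ∑' z : intLattice ι, ψ (z + x) :=
  ContinuousMap.congr_fun (isOpenQuotientMap_mk.isQuotientMap.lift_comp
    ⟨_, ψ.continuous_tsum_comp_add (intLattice ι)⟩ (factorsThrough_tsum_comp_add_mk ψ)) x

theorem mFourierCoeff_periodize (ψ : 𝓢(ι → ℝ, E)) (m : ι → ℤ) :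
    mFourierCoeff (periodize ψ) m = ∫ x, mFourier (-m) (mk x) • ψ x := by
  have hF : Integrable fun x => mFourier (-m) (mk x) • ψ x :=
    ψ.integrable.norm.mono' (by fun_prop) (ae_of_all _ fun x => by
      rw [norm_smul, norm_mFourier_apply, one_mul])
  have hD : {x : ι → ℝ | ∀ i, x i ∈ Ioc ((0 : ι → ℝ) i) ((0 : ι → ℝ) i + 1)}
      =ᵐ[volume] ZSpan.fundamentalDomain (Pi.basisFun ℝ ι) := by
    have : {x : ι → ℝ | ∀ i, x i ∈ Ioc ((0 : ι → ℝ) i) ((0 : ι → ℝ) i + 1)} =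
        pi univ fun _ => Ioc 0 1 := by ext; simp
    rw [ZSpan.fundamentalDomain_pi_basisFun, volume_pi, this]
    exact Measure.univ_pi_Ioc_ae_eq_Icc.trans Measure.univ_pi_Ico_ae_eq_Icc.symm
  have : Countable (intLattice ι).toAddSubgroup := inferInstanceAs (Countable (intLattice ι))
  rw [mFourierCoeff_eq_integral _ _ 0, setIntegral_congr_set hD,
    ← (ZSpan.isAddFundamentalDomain' (Pi.basisFun ℝ ι) volume).setIntegral_tsum_vadd hF]
  refine setIntegral_congr_fun (ZSpan.fundamentalDomain_measurableSet _) fun x _ => ?_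
  change mFourier (-m) (mk x) • periodize ψ (mk x) = _
  rw [periodize_mk, ← tsum_const_smul'']
  refine tsum_congr fun z => ?_
  rw [(mk_eq_mk_iff.2 (by simp) : mk x = mk ((z : ι → ℝ) + x))]
  rfl

end Periodize

theorem tsum_eq_tsum_integral_mFourier (ψ : 𝓢(ι → ℝ, ℂ))
    (h : Summable fun m : ι → ℤ => ∫ x, mFourier (-m) (mk x) • ψ x) :
    ∑' z : intLattice ι, ψ z = ∑' m : ι → ℤ, ∫ x, mFourier (-m) (mk x) • ψ x := by
  have hc : mFourierCoeff (periodize ψ) = _ := funext (mFourierCoeff_periodize ψ)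
  have := hasSum_mFourier_series_apply_of_summable (hc ▸ h) (mk 0)
  rw [hc, periodize_mk] at this
  simpa [mFourier, mk] using this.tsum_eq.symm

def intLatticeEquiv : (ι → ℤ) ≃ intLattice ι :=
  ((Pi.basisFun ℝ ι).restrictScalars ℤ).equivFun.symm.toEquiv

@[simp] theorem coe_intLatticeEquiv (m : ι → ℤ) :
    (intLatticeEquiv m : ι → ℝ) = fun i => (m i : ℝ) := by
  classical
  ext i
  simp [intLatticeEquiv, Module.Basis.equivFun_symm_apply, Pi.basisFun_apply, Pi.single_apply]

theorem mFourier_neg_mk (m : ι → ℤ) (x : ι → ℝ) :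
    mFourier (-m) (mk x) = 𝐞 (-inner ℝ (WithLp.toLp 2 x) (WithLp.toLp 2 fun i => (m i : ℝ))) := by
  simp only [mFourier, mk, ContinuousMap.coe_mk, Pi.neg_apply, fourier_coe_apply,
    Real.fourierChar_apply, PiLp.inner_apply, ← Complex.exp_sum]
  congr 1
  push_cast
  simp only [mul_neg, neg_mul, div_one, Finset.sum_neg_distrib, RCLike.inner_apply,
    Real.ringHom_apply, Complex.ofReal_mul, Complex.ofReal_intCast, Finset.mul_sum, Finset.sum_mul,
    neg_inj]
  exact Finset.sum_congr rfl fun i _ => by ring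

variable {E : Type*} [NormedAddCommGroup E] [NormedSpace ℂ E]

theorem integral_mFourier_neg_mk_smul (φ : EuclideanSpace ℝ ι → E) (m : ι → ℤ) :
    ∫ x, mFourier (-m) (mk x) • φ (WithLp.toLp 2 x) = 𝓕 φ (WithLp.toLp 2 ↑(intLatticeEquiv m)) := by
  rw [Real.fourier_eq, ← (PiLp.volume_preserving_toLp ι).integral_comp
    (MeasurableEquiv.toLp 2 (ι → ℝ)).measurableEmbedding]
  simp [mFourier_neg_mk, Circle.smul_def]

end UnitAddTorus

namespace SchwartzMap

open UnitAddTorus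

variable {ι F : Type*} [Fintype ι] [NormedAddCommGroup F] [NormedSpace ℝ F] [CompleteSpace F]

theorem summable_toLp_intLattice (φ : 𝓢(EuclideanSpace ℝ ι, F)) :
    Summable fun z : intLattice ι => φ (WithLp.toLp 2 ↑z) :=
  (compCLMOfContinuousLinearEquiv ℝ (EuclideanSpace.equiv ι ℝ).symm φ).summable_comp_coe _

theorem summable_fourier_toLp_intLattice (φ : 𝓢(EuclideanSpace ℝ ι, ℂ)) :
    Summable fun w : intLattice ι => 𝓕 ⇑φ (WithLp.toLp 2 ↑w) := by
  have := summable_toLp_intLattice (𝓕 φ : 𝓢(EuclideanSpace ℝ ι, ℂ))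
  rwa [fourier_coe] at this

theorem tsum_toLp_intLattice_eq_tsum_fourier (φ : 𝓢(EuclideanSpace ℝ ι, ℂ)) :
    ∑' z : intLattice ι, φ (WithLp.toLp 2 ↑z) = ∑' w : intLattice ι, 𝓕 ⇑φ (WithLp.toLp 2 ↑w) := by
  set ψ := compCLMOfContinuousLinearEquiv ℂ (EuclideanSpace.equiv ι ℝ).symm φ
  have hcoeff (m : ι → ℤ) : ∫ x, mFourier (-m) (UnitAddTorus.mk x) • ψ x =
      𝓕 ⇑φ (WithLp.toLp 2 ↑(intLatticeEquiv m)) :=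
    integral_mFourier_neg_mk_smul φ m
  have hsum := intLatticeEquiv.summable_iff.2 (summable_fourier_toLp_intLattice φ)
  have hreindex := intLatticeEquiv.tsum_eq fun w : intLattice ι => 𝓕 ⇑φ (WithLp.toLp 2 ↑w)
  calc ∑' z : intLattice ι, φ (WithLp.toLp 2 ↑z)
      _ = ∑' m : ι → ℤ, ∫ x, mFourier (-m) (UnitAddTorus.mk x) • ψ x :=
        tsum_eq_tsum_integral_mFourier ψ (by simpa only [hcoeff, Function.comp_def] using hsum)
      _ = ∑' m : ι → ℤ, 𝓕 ⇑φ (WithLp.toLp 2 ↑(intLatticeEquiv m)) := tsum_congr hcoeff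
      _ = _ := hreindex

end SchwartzMap

namespace Real

variable {V E : Type*} [NormedAddCommGroup V] [InnerProductSpace ℝ V] [FiniteDimensional ℝ V]
  [MeasurableSpace V] [BorelSpace V] [NormedAddCommGroup E] [NormedSpace ℂ E]

theorem fourier_comp_continuousLinearEquiv (f : V → E) (T : V ≃L[ℝ] V) (ξ : V) :
    𝓕 (f ∘ T) ξ = |LinearMap.det (T : V →ₗ[ℝ] V)|⁻¹ •
      𝓕 f (ContinuousLinearMap.adjoint (T.symm : V →L[ℝ] V) ξ) := by
  set S := ContinuousLinearMap.adjoint (T.symm : V →L[ℝ] V)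
  have hdet : LinearMap.det (T : V →ₗ[ℝ] V) ≠ 0 :=
    (LinearEquiv.isUnit_det' T.toLinearEquiv).ne_zero
  have hinner (x : V) : inner ℝ (T x) (S ξ) = inner ℝ x ξ := by
    rw [ContinuousLinearMap.adjoint_inner_right]
    simp
  have hmap : Measure.map T volume = ENNReal.ofReal |(LinearMap.det (T : V →ₗ[ℝ] V))⁻¹| • volume :=
    Measure.map_linearMap_addHaar_eq_smul_addHaar _ hdet
  rw [Real.fourier_eq, Real.fourier_eq]
  simp_rw [Function.comp_apply, ← hinner]
  calc ∫ v, 𝐞 (-inner ℝ (T v) (S ξ)) • f (T v)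
      _ = ∫ y, 𝐞 (-inner ℝ y (S ξ)) • f y ∂(Measure.map T volume) :=
        (integral_map_equiv (μ := volume) T.toHomeomorph.toMeasurableEquiv
          fun y => 𝐞 (-inner ℝ y (S ξ)) • f y).symm
      _ = _ := by
        rw [hmap, integral_smul_measure, ENNReal.toReal_ofReal (abs_nonneg _), abs_inv]

end Real

namespace ZLattice

variable {ι : Type*} [Fintype ι] (L : Submodule ℤ (EuclideanSpace ℝ ι)) [DiscreteTopology L]
  [IsZLattice ℝ L]

theorem exists_continuousLinearEquiv_toLp_mem :
    ∃ T : EuclideanSpace ℝ ι ≃L[ℝ] EuclideanSpace ℝ ι,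
      (∀ z ∈ UnitAddTorus.intLattice ι, T (WithLp.toLp 2 z) ∈ L) ∧
      |LinearMap.det (T : EuclideanSpace ℝ ι →ₗ[ℝ] EuclideanSpace ℝ ι)| = covolume L := by
  classical
  let b : Module.Basis ι ℤ L := (Module.Free.chooseBasis ℤ L).reindex (Fintype.equivOfCardEq
    (by rw [← Module.finrank_eq_card_chooseBasisIndex, ZLattice.rank ℝ, finrank_euclideanSpace]))
  let b₀ := (EuclideanSpace.basisFun ι ℝ).toBasis
  let T := b₀.equiv (b.ofZLatticeBasis ℝ L) (Equiv.refl ι)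
  have hTb₀ (i : ι) : T (b₀ i) = b i := by
    simp [T, Module.Basis.equiv_apply, Module.Basis.ofZLatticeBasis_apply]
  refine ⟨T.toContinuousLinearEquiv, fun z hz => ?_, ?_⟩
  · induction hz using Submodule.span_induction with
    | mem x hx =>
      obtain ⟨i, rfl⟩ := hx
      have : WithLp.toLp 2 (Pi.basisFun ℝ ι i) = b₀ i := by simp [b₀]
      change T _ ∈ L
      rw [this, hTb₀]
      exact (b i).2
    | zero => simp
    | add x y _ _ hx hy => simpa using add_mem hx hy
    | smul a x _ hx =>
      rw [WithLp.toLp_smul, map_zsmul]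
      exact zsmul_mem hx a
  · have hvol : volume.real (ZSpan.fundamentalDomain b₀) = 1 := by
      rw [measureReal_congr (ZSpan.fundamentalDomain_ae_parallelepiped b₀ volume), measureReal_def,
        OrthonormalBasis.coe_toBasis, OrthonormalBasis.volume_parallelepiped, ENNReal.toReal_one]
    have hb : (fun i => (b i : EuclideanSpace ℝ ι)) = T ∘ b₀ := funext fun i => (hTb₀ i).symm
    rw [covolume_eq_det_mul_measureReal L volume b b₀, hvol, mul_one]
    change _ = |b₀.det fun i => (b i : EuclideanSpace ℝ ι)|
    rw [hb, ← T.coe_coe, b₀.det_comp, b₀.det_self, mul_one]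
    rfl

end ZLattice

end

theorem cohn_elkies_lattice_bound_general (n : ℕ) (ℓ : ℝ)
    (f : SchwartzMap (EuclideanSpace ℝ (Fin n)) ℂ)
    (hf_neg : ∀ x : EuclideanSpace ℝ (Fin n), ℓ ≤ ‖x‖ → (f x).re ≤ 0)
    (hFf_nonneg : ∀ ξ, 0 ≤ (𝓕 (f : EuclideanSpace ℝ (Fin n) → ℂ) ξ).re)
    (hFf0 : 0 < (𝓕 (f : EuclideanSpace ℝ (Fin n) → ℂ) 0).re)
    (L : Submodule ℤ (EuclideanSpace ℝ (Fin n)))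
    [DiscreteTopology L] [IsZLattice ℝ L]
    (hshort : ∀ v ∈ L, v ≠ 0 → ℓ ≤ ‖v‖) :
    1 / ZLattice.covolume L ≤ (f 0).re / (𝓕 (f : EuclideanSpace ℝ (Fin n) → ℂ) 0).re := by
  obtain ⟨T, hTL, hdet⟩ := ZLattice.exists_continuousLinearEquiv_toLp_mem L
  let g := SchwartzMap.compCLMOfContinuousLinearEquiv ℂ T f
  have hFg (ξ) : (𝓕 ⇑g ξ).re = (ZLattice.covolume L)⁻¹ *
      (𝓕 ⇑f (ContinuousLinearMap.adjoint (T.symm : _ →L[ℝ] _) ξ)).re := by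
    rw [← hdet, ← smul_eq_mul, ← Complex.smul_re]
    exact congrArg Complex.re (Real.fourier_comp_continuousLinearEquiv f T ξ)
  have hsum := Complex.hasSum_re g.summable_toLp_intLattice.hasSum
  have hFsum := Complex.hasSum_re g.summable_fourier_toLp_intLattice.hasSum
  rw [le_div_iff₀ hFf0, one_div_mul_eq_div]
  calc (𝓕 ⇑f 0).re / ZLattice.covolume L
      _ = (𝓕 ⇑g (WithLp.toLp 2 ↑(0 : UnitAddTorus.intLattice (Fin n)))).re := by
        simp [hFg, div_eq_inv_mul]
      _ ≤ ∑' w : UnitAddTorus.intLattice (Fin n), (𝓕 ⇑g (WithLp.toLp 2 ↑w)).re :=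
        hFsum.summable.le_tsum 0 fun w _ => by
          rw [hFg]
          exact mul_nonneg (inv_nonneg.2 (ZLattice.covolume_pos L).le) (hFf_nonneg _)
      _ = ∑' z : UnitAddTorus.intLattice (Fin n), (g (WithLp.toLp 2 ↑z)).re := by
        rw [hsum.tsum_eq, hFsum.tsum_eq, g.tsum_toLp_intLattice_eq_tsum_fourier]
      _ ≤ (g (WithLp.toLp 2 ↑(0 : UnitAddTorus.intLattice (Fin n)))).re :=
        hsum.summable.tsum_le_of_nonpos_of_ne 0 fun z hz =>
          hf_neg _ (hshort _ (hTL z z.2) (by simpa using hz))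
      _ = (f 0).re := by simp [g]

/-- **Cohn–Elkies bound for lattices.** If `f` is a real-valued Schwartz function with
real-valued Fourier transform, `f ≤ 0` outside the ball of radius `ℓ`, `𝓕 f ≥ 0` everywhere
and `𝓕 f 0 > 0`, then any full-rank lattice `L ⊆ ℝⁿ` whose nonzero vectors have length at
least `ℓ` satisfies `1 / covol L ≤ f 0 / 𝓕 f 0`. -/
theorem cohn_elkies_lattice_bound (n : ℕ) (ℓ : ℝ)
    (f : SchwartzMap (EuclideanSpace ℝ (Fin n)) ℂ)
    (hf_real : ∀ x, (f x).im = 0)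
    (hFf_real : ∀ ξ, (𝓕 (f : EuclideanSpace ℝ (Fin n) → ℂ) ξ).im = 0)
    (hf_neg : ∀ x : EuclideanSpace ℝ (Fin n), ℓ ≤ ‖x‖ → (f x).re ≤ 0)
    (hFf_nonneg : ∀ ξ, 0 ≤ (𝓕 (f : EuclideanSpace ℝ (Fin n) → ℂ) ξ).re)
    (hFf0 : 0 < (𝓕 (f : EuclideanSpace ℝ (Fin n) → ℂ) 0).re)
    (L : Submodule ℤ (EuclideanSpace ℝ (Fin n)))
    [DiscreteTopology L] [IsZLattice ℝ L]
    (hshort : ∀ v ∈ L, v ≠ 0 → ℓ ≤ ‖v‖) :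
    1 / ZLattice.covolume L ≤ (f 0).re / (𝓕 (f : EuclideanSpace ℝ (Fin n) → ℂ) 0).re :=
  cohn_elkies_lattice_bound_general n ℓ f hf_neg hFf_nonneg hFf0 L hshort
end

section
/- Let α, β, σ > 0 with β = π²/(4σ²), let Ξ > 0, and set κ = exp(−n σβ Ξ^{1/(2n)}/(2πe)). If α ≤ qπ where q = (σ/e)Ξ when Ξ ≤ 1 and q = σ/e when Ξ > 1, then for every ℓ ∈ ℝ^n and all x ∈ ℝ^n, ∫_{ℝ^n} e^{−α‖y−ℓ‖²} ψ_β(x−y) dy ≥ κ e^{−α‖x−ℓ‖²}. -/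
/-!
Convolving two Gaussians gives a Gaussian:
`e^{−α‖·−ℓ‖²} ⋆ ψ_β = (1 + βα/π²)^{−n/2} e^{−γ‖x−ℓ‖²}` with `γ = απ²/(βα + π²) ≤ α`.
Since `(1 + t)^{−n/2} ≥ e^{−nt/2}`, it remains to check `βα/π² ≤ σβΞ^{1/(2n)}/(πe)`, i.e.
`α ≤ σπΞ^{1/(2n)}/e`, which follows from the range of `α` because `min Ξ 1 ≤ Ξ^{1/(2n)}`.
-/

open MeasureTheory Real

noncomputable section

/-- `ψ_β(x) = (π/β)^{n/2} e^{−(π²/β)‖x‖²}`, the Fourier transform of `φ_β(x)=e^{−β‖x‖²}`. -/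
def psi {n : ℕ} (β : ℝ) : EuclideanSpace ℝ (Fin n) → ℝ :=
  fun x => (Real.pi / β) ^ ((n : ℝ) / 2) * Real.exp (-(Real.pi ^ 2 / β) * ‖x‖ ^ 2)

section GaussianProduct

variable {V : Type*} [NormedAddCommGroup V] [InnerProductSpace ℝ V]

/-- Completing the square: the cross terms in `⟪z, u⟫` cancel. -/
lemma mul_norm_add_sq_add_mul_norm_sub_sq {a b : ℝ} (hab : a + b ≠ 0) (z u : V) :
    a * ‖z + (b / (a + b)) • u‖ ^ 2 + b * ‖(a / (a + b)) • u - z‖ ^ 2 =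
      (a + b) * ‖z‖ ^ 2 + a * b / (a + b) * ‖u‖ ^ 2 := by
  rw [norm_add_sq_real, norm_sub_sq_real, norm_smul, norm_smul, real_inner_smul_right,
    real_inner_smul_left, real_inner_comm, mul_pow, mul_pow, Real.norm_eq_abs, Real.norm_eq_abs,
    sq_abs, sq_abs]
  field_simp
  ring

variable [FiniteDimensional ℝ V] [MeasurableSpace V] [BorelSpace V]

theorem integral_exp_neg_mul_sq_norm_sub_mul {a b : ℝ} (hab : 0 < a + b) (ℓ x : V) :
    ∫ y, rexp (-a * ‖y - ℓ‖ ^ 2) * rexp (-b * ‖x - y‖ ^ 2) =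
      (π / (a + b)) ^ ((Module.finrank ℝ V : ℝ) / 2) *
        rexp (-(a * b / (a + b)) * ‖x - ℓ‖ ^ 2) := by
  set m : V := ℓ + (b / (a + b)) • (x - ℓ)
  have hsplit : ∀ z : V, rexp (-a * ‖(z + m) - ℓ‖ ^ 2) * rexp (-b * ‖x - (z + m)‖ ^ 2) =
      rexp (-(a + b) * ‖z‖ ^ 2) * rexp (-(a * b / (a + b)) * ‖x - ℓ‖ ^ 2) := by
    intro z
    have hxm : x - (z + m) = (a / (a + b)) • (x - ℓ) - z := by
      rw [show a / (a + b) = 1 - b / (a + b) by field_simp; ring, sub_smul, one_smul]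
      simp only [m]
      abel
    have hmℓ : z + m - ℓ = z + (b / (a + b)) • (x - ℓ) := by
      simp only [m]
      abel
    rw [← exp_add, ← exp_add, hxm, hmℓ]
    congr 1
    linear_combination -(mul_norm_add_sq_add_mul_norm_sub_sq hab.ne' z (x - ℓ))
  rw [← integral_add_right_eq_self _ m]
  simp only [hsplit]
  rw [integral_mul_const, GaussianFourier.integral_rexp_neg_mul_sq_norm hab]

end GaussianProduct

theorem integral_exp_neg_mul_sq_norm_sub_mul_psi {n : ℕ} {α β : ℝ} (hα : 0 ≤ α) (hβ : 0 < β)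
    (ℓ x : EuclideanSpace ℝ (Fin n)) :
    ∫ y, rexp (-α * ‖y - ℓ‖ ^ 2) * psi β (x - y) =
      (π ^ 2 / (β * α + π ^ 2)) ^ ((n : ℝ) / 2) *
        rexp (-(α * π ^ 2 / (β * α + π ^ 2)) * ‖x - ℓ‖ ^ 2) := by
  have hab : 0 < α + π ^ 2 / β := by positivity
  simp only [psi, mul_left_comm _ ((π / β) ^ ((n : ℝ) / 2))]
  rw [integral_const_mul, integral_exp_neg_mul_sq_norm_sub_mul hab, finrank_euclideanSpace_fin,
    ← mul_assoc, ← mul_rpow (by positivity) (by positivity)]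
  have hβ' : β ≠ 0 := hβ.ne'
  congr 2
  · field_simp
  · field_simp

lemma exp_neg_mul_le_inv_one_add_rpow {s t : ℝ} (hs : 0 ≤ s) (ht : -1 < t) :
    rexp (-(s * t)) ≤ (1 + t)⁻¹ ^ s := by
  have h1t : 0 < 1 + t := by linarith
  rw [inv_rpow h1t.le, exp_neg, mul_comm, exp_mul]
  gcongr
  linarith [add_one_le_exp t]

lemma ite_le_rpow {Ξ p : ℝ} (hΞ : 0 < Ξ) (hp0 : 0 ≤ p) (hp1 : p ≤ 1) :
    (if Ξ ≤ 1 then Ξ else 1) ≤ Ξ ^ p := by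
  split_ifs with h
  · simpa using rpow_le_rpow_of_exponent_ge hΞ h hp1
  · exact one_le_rpow (not_le.mp h).le hp0

lemma one_div_two_mul_natCast_le_one (n : ℕ) : 1 / (2 * (n : ℝ)) ≤ 1 := by
  rcases Nat.eq_zero_or_pos n with rfl | hn
  · simp
  · rw [div_le_one (by positivity)]
    linarith [(Nat.one_le_cast (α := ℝ)).mpr hn]

/-- **Lower bound for the smoothed Gaussian.** With `β = π²/(4σ²)`,
`κ = exp(−nσβΞ^{1/2n}/(2πe))` and `α ≤ qπ` where `q = (σ/e)Ξ` if `Ξ ≤ 1` and `q = σ/e`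
if `Ξ > 1`, one has `(e^{−α‖·−ℓ‖²} ⋆ ψ_β)(x) ≥ κ e^{−α‖x−ℓ‖²}` for all `x, ℓ`. -/
theorem smoothed_gaussian_lower_bound {n : ℕ} (α β σ Ξ : ℝ)
    (hα : 0 < α) (hσ : 0 < σ) (hΞ : 0 < Ξ)
    (hβ : β = Real.pi ^ 2 / (4 * σ ^ 2))
    (hrange : α ≤ (if Ξ ≤ 1 then σ / Real.exp 1 * Ξ else σ / Real.exp 1) * Real.pi)
    (ℓ x : EuclideanSpace ℝ (Fin n)) :
    (∫ y : EuclideanSpace ℝ (Fin n), Real.exp (-α * ‖y - ℓ‖ ^ 2) * psi β (x - y))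
      ≥ Real.exp (-(n : ℝ) * (σ * β * Ξ ^ (1 / (2 * (n : ℝ)))) / (2 * Real.pi * Real.exp 1)) *
        Real.exp (-α * ‖x - ℓ‖ ^ 2) := by
  have hβ0 : 0 < β := hβ ▸ by positivity
  set p : ℝ := 1 / (2 * (n : ℝ))
  have hαΞ : α ≤ σ / rexp 1 * Ξ ^ p * π :=
    calc α ≤ σ / rexp 1 * (if Ξ ≤ 1 then Ξ else 1) * π := by rwa [mul_ite, mul_one]
      _ ≤ σ / rexp 1 * Ξ ^ p * π := by
        gcongr
        exact ite_le_rpow hΞ (by positivity) (one_div_two_mul_natCast_le_one n)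
  have ht : β * α / π ^ 2 ≤ σ * β * Ξ ^ p / (π * rexp 1) :=
    calc β * α / π ^ 2 = α / (4 * σ ^ 2) := by rw [hβ]; field_simp
      _ ≤ σ / rexp 1 * Ξ ^ p * π / (4 * σ ^ 2) := by gcongr
      _ = σ * β * Ξ ^ p / (π * rexp 1) := by rw [hβ]; field_simp
  have hcoeff : π ^ 2 / (β * α + π ^ 2) = (1 + β * α / π ^ 2)⁻¹ := by field_simp; ring
  have hwidth : α * π ^ 2 / (β * α + π ^ 2) ≤ α := by
    rw [div_le_iff₀ (by positivity)]
    nlinarith [mul_pos hβ0 hα]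
  rw [integral_exp_neg_mul_sq_norm_sub_mul_psi hα.le hβ0, ge_iff_le, hcoeff]
  refine mul_le_mul ?_ (by gcongr) (exp_pos _).le (by positivity)
  calc rexp (-(n : ℝ) * (σ * β * Ξ ^ p) / (2 * π * rexp 1))
      = rexp (-((n / 2) * (σ * β * Ξ ^ p / (π * rexp 1)))) := by ring_nf
    _ ≤ rexp (-((n / 2) * (β * α / π ^ 2))) := by gcongr
    _ ≤ (1 + β * α / π ^ 2)⁻¹ ^ ((n : ℝ) / 2) :=
      exp_neg_mul_le_inv_one_add_rpow (by positivity)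
        (by linarith [show 0 ≤ β * α / π ^ 2 by positivity])
end
end
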